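/- Let g : ℝ → ℝ be a function satisfying the Lipschitz condition |g(μ) - g(μ')| ≤ L|μ - μ'| for all μ, μ' (L ≥ 0), and the bounds g(μ) ≥ g(0) + c₊ μ for μ ≥ 0 and g(μ) ≥ g(0) + c₋ μ for μ ≤ 0, with -L ≤ c₋, c₊ ≤ L. Suppose g(0) > 0 and there exists μ₁ > 0 with g(μ₁) < 0. Then there is α₀ > 0 such that for every α > α₀ the equation g(μ) = -(μ/α)² has at least two solutions in (0, ∞). -/

import Mathlib

/-! The function `h ν = g ν + (ν / α) ^ 2` is continuous with `h 0 = g 0 > 0`, it is negative at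
`μ₁` once `α > μ₁ / √(-g μ₁)`, and it tends to `+∞` because the linear lower bound on `g` is beaten
by the quadratic term. Two sign changes of `h` on `(0, ∞)` give two zeros. -/

open Filter Set

lemma tendsto_add_sq_div_atTop {g : ℝ → ℝ} {α a b : ℝ} (hα : α ≠ 0)
    (hlb : ∀ ν ≥ (0 : ℝ), a + b * ν ≤ g ν) :
    Tendsto (fun ν => g ν + (ν / α) ^ 2) atTop atTop := by
  have hquad : Tendsto (fun ν : ℝ => ν * (ν / α ^ 2 + b) + a) atTop atTop := by
    refine tendsto_atTop_add_const_right _ a (tendsto_id.atTop_mul_atTop₀ ?_)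
    exact tendsto_atTop_add_const_right _ b
      (tendsto_id.atTop_div_const (by positivity))
  refine tendsto_atTop_mono' _ ?_ hquad
  filter_upwards [eventually_ge_atTop 0] with ν hν
  have := hlb ν hν
  calc ν * (ν / α ^ 2 + b) + a = a + b * ν + (ν / α) ^ 2 := by field_simp; ring
    _ ≤ g ν + (ν / α) ^ 2 := by gcongr

lemma exists_zero_Ioo_zero_Ioo_of_pos_neg_pos {h : ℝ → ℝ} (hh : Continuous h) {a b c : ℝ}
    (hab : a ≤ b) (hbc : b ≤ c) (ha : 0 < h a) (hb : h b < 0) (hc : 0 < h c) :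
    ∃ x ∈ Ioo a b, ∃ y ∈ Ioo b c, h x = 0 ∧ h y = 0 := by
  obtain ⟨x, hx, hx0⟩ := intermediate_value_Ioo' hab hh.continuousOn ⟨hb, ha⟩
  obtain ⟨y, hy, hy0⟩ := intermediate_value_Ioo hbc hh.continuousOn ⟨hb, hc⟩
  exact ⟨x, hx, y, hy, hx0, hy0⟩

lemma sq_div_lt_of_div_sqrt_lt {c μ α : ℝ} (hc : 0 < c) (hμ : 0 ≤ μ) (hα : μ / √c < α) :
    (μ / α) ^ 2 < c := by
  have hα0 : 0 < α := (div_nonneg hμ (Real.sqrt_nonneg c)).trans_lt hα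
  have hlt : μ / α < √c := by
    rw [div_lt_iff₀ hα0, mul_comm]
    rwa [div_lt_iff₀ (Real.sqrt_pos.mpr hc)] at hα
  calc (μ / α) ^ 2 < √c ^ 2 := by gcongr
    _ = c := Real.sq_sqrt hc.le

theorem stmt17_general (g : ℝ → ℝ) (L cp : ℝ)
    (hlip : ∀ μ μ' : ℝ, |g μ - g μ'| ≤ L * |μ - μ'|)
    (hlbp : ∀ μ ≥ (0 : ℝ), g 0 + cp * μ ≤ g μ)
    (h0 : 0 < g 0) (μ₁ : ℝ) (hμ₁ : 0 < μ₁) (hneg : g μ₁ < 0) :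
    ∃ α₀ > (0 : ℝ), ∀ α > α₀, ∃ ν₁ ν₂ : ℝ, 0 < ν₁ ∧ 0 < ν₂ ∧ ν₁ ≠ ν₂ ∧
      g ν₁ = -(ν₁ / α) ^ 2 ∧ g ν₂ = -(ν₂ / α) ^ 2 := by
  have hg : Continuous g := (LipschitzWith.of_dist_le' (K := L) fun x y => by
    simpa only [Real.dist_eq] using hlip x y).continuous
  have hc : 0 < -g μ₁ := neg_pos.mpr hneg
  refine ⟨μ₁ / √(-g μ₁), div_pos hμ₁ (Real.sqrt_pos.mpr hc), fun α hα => ?_⟩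
  set h : ℝ → ℝ := fun ν => g ν + (ν / α) ^ 2
  have hα0 : α ≠ 0 := ((div_pos hμ₁ (Real.sqrt_pos.mpr hc)).trans hα).ne'
  have hh0 : 0 < h 0 := by simpa [h] using h0
  have hhμ₁ : h μ₁ < 0 := by
    have := sq_div_lt_of_div_sqrt_lt hc hμ₁.le hα
    simp only [h]; linarith
  obtain ⟨c, hc_pos, hμ₁c⟩ := ((tendsto_add_sq_div_atTop hα0 hlbp).eventually_gt_atTop 0
    |>.and (eventually_ge_atTop μ₁)).exists
  obtain ⟨ν₁, hν₁, ν₂, hν₂, hz₁, hz₂⟩ := exists_zero_Ioo_zero_Ioo_of_pos_neg_pos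
    (show Continuous h by fun_prop) hμ₁.le hμ₁c hh0 hhμ₁ hc_pos
  refine ⟨ν₁, ν₂, hν₁.1, hμ₁.trans hν₂.1, (hν₁.2.trans hν₂.1).ne, ?_, ?_⟩
  · simp only [h] at hz₁; linarith
  · simp only [h] at hz₂; linarith

/-- if `g` is `L`-Lipschitz, satisfies the one-sided linear lower
bounds `g(μ) ≥ g(0) + c₊μ` (`μ ≥ 0`) and `g(μ) ≥ g(0) + c₋μ` (`μ ≤ 0`) with
`-L ≤ c₋, c₊ ≤ L`, `g(0) > 0`, and `g(μ₁) < 0` for some `μ₁ > 0`, then there is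
`α₀ > 0` such that for every `α > α₀` the equation `g(μ) = -(μ/α)²` has at
least two solutions in `(0, ∞)`. -/
theorem stmt17 (g : ℝ → ℝ) (L cm cp : ℝ) (hL : 0 ≤ L)
    (hlip : ∀ μ μ' : ℝ, |g μ - g μ'| ≤ L * |μ - μ'|)
    (hlbp : ∀ μ ≥ (0 : ℝ), g 0 + cp * μ ≤ g μ)
    (hlbm : ∀ μ ≤ (0 : ℝ), g 0 + cm * μ ≤ g μ)
    (hcm : -L ≤ cm ∧ cm ≤ L) (hcp : -L ≤ cp ∧ cp ≤ L)
    (h0 : 0 < g 0) (μ₁ : ℝ) (hμ₁ : 0 < μ₁) (hneg : g μ₁ < 0) :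
    ∃ α₀ > (0 : ℝ), ∀ α > α₀, ∃ ν₁ ν₂ : ℝ, 0 < ν₁ ∧ 0 < ν₂ ∧ ν₁ ≠ ν₂ ∧
      g ν₁ = -(ν₁ / α) ^ 2 ∧ g ν₂ = -(ν₂ / α) ^ 2 :=
  stmt17_general g L cp hlip hlbp h0 μ₁ hμ₁ hneg
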